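/- arXiv:1802.10133 — 7 statements merged into one kernel-verified Lean document; each statement's English description precedes it below -/
import Mathlib

section
/- Each moment Mᵢ = L Dⁱ R (for i ≥ 0) is a symmetric m×m matrix, given L = [A₁₂, Γ₁₂] with A₁₂ᵀ = A₂₁, Γ₁₂ᵀ = Γ₂₁, A₂₂ and Γ₂₂ symmetric, D = [[0, I], [-A₂₂, -Γ₂₂]], R = [[A₂₂⁻¹A₂₁], [-Γ₂₁]]. -/
open Matrix

/-!
With `J = [[A₂₂⁻¹, 0], [0, -I]]` one has `R = J Lᵀ`, so `Mᵢ = L (Dⁱ J) Lᵀ` and it suffices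
that `Dⁱ J` is symmetric. Both `J` and `D J = [[0, -I], [-I, Γ₂₂]]` are symmetric, so
`J Dᵀ = D J`, and then `Dᵏ⁺¹ J = Dᵏ J Dᵀ = (D Dᵏ J)ᵀ` propagates symmetry to every power.
-/

namespace Matrix

variable {ι κ α : Type*} [Fintype ι] [CommSemiring α]

theorem IsSymm.mul_mul_transpose {B : Matrix ι ι α} (hB : B.IsSymm) (A : Matrix κ ι α) :
    (A * B * Aᵀ).IsSymm := by
  rw [IsSymm, transpose_mul, transpose_mul, transpose_transpose, hB.eq, Matrix.mul_assoc]

theorem IsSymm.pow_mul [DecidableEq ι] {D J : Matrix ι ι α} (hJ : J.IsSymm)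
    (hDJ : (D * J).IsSymm) (k : ℕ) : (D ^ k * J).IsSymm := by
  induction k with
  | zero => simpa using hJ
  | succ k ih =>
    have hJD : J * Dᵀ = D * J := by rw [← hDJ.eq, transpose_mul, hJ.eq]
    calc (D ^ (k + 1) * J)ᵀ = (D ^ k * J)ᵀ * Dᵀ := by
          rw [pow_succ', Matrix.mul_assoc, transpose_mul]
      _ = D ^ k * (D * J) := by rw [ih.eq, Matrix.mul_assoc, hJD]
      _ = D ^ (k + 1) * J := by rw [← Matrix.mul_assoc, ← pow_succ]

end Matrix

theorem stmt_5 {m n : ℕ} (A12 Γ12 : Matrix (Fin m) (Fin n) ℝ)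
    (A21 Γ21 : Matrix (Fin n) (Fin m) ℝ) (A22 Γ22 : Matrix (Fin n) (Fin n) ℝ)
    (hA22 : IsUnit A22.det) (hA22s : A22.IsSymm) (hΓ22s : Γ22.IsSymm)
    (hA : A12ᵀ = A21) (hΓ : Γ12ᵀ = Γ21) (i : ℕ) :
    (fromCols A12 Γ12 *
      (fromBlocks (0 : Matrix (Fin n) (Fin n) ℝ) 1 (-A22) (-Γ22)) ^ i *
      fromRows (A22⁻¹ * A21) (-Γ21)).IsSymm := by
  set L := fromCols A12 Γ12
  set D := fromBlocks (0 : Matrix (Fin n) (Fin n) ℝ) 1 (-A22) (-Γ22)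
  set J := fromBlocks A22⁻¹ 0 0 (-1 : Matrix (Fin n) (Fin n) ℝ)
  have hJ : J.IsSymm := hA22s.inv.fromBlocks transpose_zero isSymm_one.neg
  have hDJ : D * J = fromBlocks 0 (-1) (-1) Γ22 := by
    simp [D, J, fromBlocks_multiply, mul_nonsing_inv _ hA22]
  have hR : fromRows (A22⁻¹ * A21) (-Γ21) = J * Lᵀ := by
    simp [J, L, transpose_fromCols, fromBlocks_mul_fromRows, hA, hΓ]
  have hDJs : (D * J).IsSymm := hDJ ▸ isSymm_zero.fromBlocks (by simp) hΓ22s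
  rw [hR, ← Matrix.mul_assoc, Matrix.mul_assoc L]
  exact (hJ.pow_mul hDJs i).mul_mul_transpose L
end

section
/- The moments Mᵢ = L Dⁱ R (with Γ = γI) satisfy the identity γM₂ + M₃ = 0. -/
/-!
With `L = [A₁₂, 0]`, `D = [[0, I], [-A₂₂, -γI]]` and `R = [X; 0]`, the sum `γM₂ + M₃` factors as
`(L D (D + γ)) (D R)`. Here `L D (D + γ) = [-A₁₂A₂₂, 0]` has vanishing second block column, while
`D R = [0; -A₂₂X]` has vanishing first block row, so the product is zero.
-/

open Matrix

section BlockProducts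

variable {α : Type*} {l m n : Type*} [Fintype n]

theorem fromCols_zero_mul_fromRows_zero [Semiring α]
    (X : Matrix l n α) (Y : Matrix n m α) :
    fromCols X (0 : Matrix l n α) * fromRows (0 : Matrix n m α) Y = 0 := by
  simp [fromCols_mul_fromRows]

theorem fromBlocks_zero_mul_fromRows_zero [Semiring α]
    (B C E : Matrix n n α) (X : Matrix n m α) :
    fromBlocks (0 : Matrix n n α) B C E * fromRows X (0 : Matrix n m α) = fromRows 0 (C * X) := by
  simp [fromBlocks_mul_fromRows]

theorem fromCols_zero_mul_fromBlocks_zero_one [Semiring α] [DecidableEq n]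
    (X : Matrix l n α) (C E : Matrix n n α) :
    fromCols X (0 : Matrix l n α) * fromBlocks (0 : Matrix n n α) 1 C E = fromCols 0 X := by
  rw [fromCols_mul_fromBlocks]
  simp

theorem zero_fromCols_mul_fromBlocks_add_smul_one [Ring α] [DecidableEq n]
    (X : Matrix l n α) (A : Matrix n n α) (γ : α) :
    fromCols (0 : Matrix l n α) X *
        (fromBlocks 0 1 (-A) (-(γ • 1)) + γ • 1 : Matrix (n ⊕ n) (n ⊕ n) α) =
      fromCols (-(X * A)) 0 := by
  rw [← fromBlocks_one, fromBlocks_smul, fromBlocks_add, fromCols_mul_fromBlocks]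
  simp

end BlockProducts

theorem stmt_8_general {m n : ℕ} (A12 : Matrix (Fin m) (Fin n) ℝ)
    (A21 : Matrix (Fin n) (Fin m) ℝ) (A22 : Matrix (Fin n) (Fin n) ℝ)
    (γ : ℝ)
    (L : Matrix (Fin m) (Fin n ⊕ Fin n) ℝ)
    (D : Matrix (Fin n ⊕ Fin n) (Fin n ⊕ Fin n) ℝ)
    (R : Matrix (Fin n ⊕ Fin n) (Fin m) ℝ)
    (hL : L = fromCols A12 (0 : Matrix (Fin m) (Fin n) ℝ))
    (hD : D = fromBlocks 0 1 (-A22) (-(γ • (1 : Matrix (Fin n) (Fin n) ℝ))))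
    (hR : R = fromRows (A22⁻¹ * A21) (0 : Matrix (Fin n) (Fin m) ℝ)) :
    γ • (L * D ^ 2 * R) + L * D ^ 3 * R = 0 := by
  have hfactor : γ • (L * D ^ 2 * R) + L * D ^ 3 * R = L * D * (D + γ • 1) * (D * R) := by
    simp only [pow_succ, pow_zero, Matrix.one_mul, Matrix.mul_add, Matrix.add_mul, Matrix.mul_smul,
      Matrix.smul_mul, Matrix.mul_one, Matrix.mul_assoc]
    abel
  rw [hfactor, hL, hD, hR, fromCols_zero_mul_fromBlocks_zero_one,
    zero_fromCols_mul_fromBlocks_add_smul_one, fromBlocks_zero_mul_fromRows_zero,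
    fromCols_zero_mul_fromRows_zero]

theorem stmt_8 {m n : ℕ} (A12 : Matrix (Fin m) (Fin n) ℝ)
    (A21 : Matrix (Fin n) (Fin m) ℝ) (A22 : Matrix (Fin n) (Fin n) ℝ)
    (hA22 : IsUnit A22.det) (hA : A12ᵀ = A21) (γ : ℝ)
    (L : Matrix (Fin m) (Fin n ⊕ Fin n) ℝ)
    (D : Matrix (Fin n ⊕ Fin n) (Fin n ⊕ Fin n) ℝ)
    (R : Matrix (Fin n ⊕ Fin n) (Fin m) ℝ)
    (hL : L = fromCols A12 (0 : Matrix (Fin m) (Fin n) ℝ))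
    (hD : D = fromBlocks 0 1 (-A22) (-(γ • (1 : Matrix (Fin n) (Fin n) ℝ))))
    (hR : R = fromRows (A22⁻¹ * A21) (0 : Matrix (Fin n) (Fin m) ℝ)) :
    γ • (L * D ^ 2 * R) + L * D ^ 3 * R = 0 :=
  stmt_8_general A12 A21 A22 γ L D R hL hD hR
end

section
/- The moments Mᵢ = L Dⁱ R (with Γ = γI) satisfy the identity γ²M₃ + 2γM₄ + M₅ = 0. -/
/-!
With `D = [[0, 1], [-A₂₂, -γ]]` one has `D (D + γ) = -diag(A₂₂, A₂₂)`, and `D` commutes with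
`D + γ`, so `γ² D³ + 2γ D⁴ + D⁵ = D³ (D + γ)² = (D (D + γ))² D = diag(A₂₂², A₂₂²) D`.
Since `R` lives in the first block row, `D R` lives in the second one, which the block-diagonal
factor preserves and `L` annihilates.
-/

open Matrix

theorem smul_pow_three_add_smul_pow_four_add_pow_five {R A : Type*} [CommRing R] [Ring A]
    [Algebra R A] (D : A) (c : R) :
    c ^ 2 • D ^ 3 + (2 * c) • D ^ 4 + D ^ 5 = (D * (D + c • 1)) ^ 2 * D := by
  have hc : Commute D (D + c • 1) :=
    (Commute.refl D).add_right ((Commute.one_right D).smul_right c)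
  calc c ^ 2 • D ^ 3 + (2 * c) • D ^ 4 + D ^ 5 = D ^ 3 * (D + c • 1) ^ 2 := by
        simp only [sq, mul_add, add_mul, mul_smul_comm, smul_mul_assoc, mul_one, one_mul,
          ← mul_assoc, ← pow_succ, Nat.reduceAdd]
        module
    _ = (D * (D + c • 1)) ^ 2 * D := by
        rw [hc.mul_pow, mul_assoc, ← (hc.pow_right 2).eq, ← mul_assoc, ← pow_succ]

theorem fromBlocks_companion_mul_add_smul_one {ι α : Type*} [Fintype ι] [DecidableEq ι]
    [CommRing α] (K : Matrix ι ι α) (c : α) :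
    fromBlocks 0 1 (-K) (-(c • 1)) * (fromBlocks 0 1 (-K) (-(c • 1)) + c • 1) =
      -fromBlocks K 0 0 K := by
  rw [← fromBlocks_one, fromBlocks_smul, fromBlocks_add, fromBlocks_multiply, fromBlocks_neg]
  simp

theorem stmt_9_general {m n : ℕ} (A12 : Matrix (Fin m) (Fin n) ℝ)
    (A21 : Matrix (Fin n) (Fin m) ℝ) (A22 : Matrix (Fin n) (Fin n) ℝ)
    (γ : ℝ)
    (L : Matrix (Fin m) (Fin n ⊕ Fin n) ℝ)
    (D : Matrix (Fin n ⊕ Fin n) (Fin n ⊕ Fin n) ℝ)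
    (R : Matrix (Fin n ⊕ Fin n) (Fin m) ℝ)
    (hL : L = fromCols A12 (0 : Matrix (Fin m) (Fin n) ℝ))
    (hD : D = fromBlocks 0 1 (-A22) (-(γ • (1 : Matrix (Fin n) (Fin n) ℝ))))
    (hR : R = fromRows (A22⁻¹ * A21) (0 : Matrix (Fin n) (Fin m) ℝ)) :
    γ ^ 2 • (L * D ^ 3 * R) + (2 * γ) • (L * D ^ 4 * R) + L * D ^ 5 * R = 0 := by
  have hsum : γ ^ 2 • (L * D ^ 3 * R) + (2 * γ) • (L * D ^ 4 * R) + L * D ^ 5 * R =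
      L * (γ ^ 2 • D ^ 3 + (2 * γ) • D ^ 4 + D ^ 5) * R := by
    simp only [Matrix.mul_add, Matrix.add_mul, Matrix.mul_smul, Matrix.smul_mul]
  rw [hsum, smul_pow_three_add_smul_pow_four_add_pow_five, hD,
    fromBlocks_companion_mul_add_smul_one, neg_sq, hL, hR]
  simp [sq, fromBlocks_multiply, fromCols_mul_fromBlocks, fromCols_mul_fromRows]

theorem stmt_9 {m n : ℕ} (A12 : Matrix (Fin m) (Fin n) ℝ)
    (A21 : Matrix (Fin n) (Fin m) ℝ) (A22 : Matrix (Fin n) (Fin n) ℝ)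
    (hA22 : IsUnit A22.det) (hA : A12ᵀ = A21) (γ : ℝ)
    (L : Matrix (Fin m) (Fin n ⊕ Fin n) ℝ)
    (D : Matrix (Fin n ⊕ Fin n) (Fin n ⊕ Fin n) ℝ)
    (R : Matrix (Fin n ⊕ Fin n) (Fin m) ℝ)
    (hL : L = fromCols A12 (0 : Matrix (Fin m) (Fin n) ℝ))
    (hD : D = fromBlocks 0 1 (-A22) (-(γ • (1 : Matrix (Fin n) (Fin n) ℝ))))
    (hR : R = fromRows (A22⁻¹ * A21) (0 : Matrix (Fin n) (Fin m) ℝ)) :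
    γ ^ 2 • (L * D ^ 3 * R) + (2 * γ) • (L * D ^ 4 * R) + L * D ^ 5 * R = 0 :=
  stmt_9_general A12 A21 A22 γ L D R hL hD hR
end

section
/- The moments Mᵢ = L Dⁱ R (with Γ = γI) satisfy the identity γ³M₄ + 3γ²M₅ + 3γM₆ + M₇ = 0. -/
/-!
Right multiplication by `D` acts on block rows as `(P, Q) ↦ (-Q A₂₂, P - γ Q)`, so
`L Dᵏ R = Pₖ A₂₂⁻¹ A₂₁` where `(Pₖ, Qₖ)` is the orbit of `(A₁₂, 0)`. Every `Pₖ` is `A₁₂` times a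
polynomial in `A₂₂` and `γ`, and the identity becomes a polynomial identity. For scalar `A₂₂ = a`
it reads `λ₁³(λ₁ + γ)³ = λ₂³(λ₂ + γ)³` for the roots of `λ² + γλ + a`, which holds because
`λᵢ(λᵢ + γ) = -a`.
-/

open Matrix

namespace Matrix

variable {ι κ α : Type*} [Fintype κ] [CommRing α]

def blockCompanionOrbit (K : Matrix κ κ α) (γ : α) (A : Matrix ι κ α) :
    ℕ → Matrix ι κ α × Matrix ι κ α
  | 0 => (A, 0)
  | k + 1 => (-((blockCompanionOrbit K γ A k).2 * K),
      (blockCompanionOrbit K γ A k).1 - γ • (blockCompanionOrbit K γ A k).2)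

theorem blockCompanionOrbit_fst_binomial (K : Matrix κ κ α) (γ : α) (A : Matrix ι κ α) :
    γ ^ 3 • (blockCompanionOrbit K γ A 4).1 + (3 * γ ^ 2) • (blockCompanionOrbit K γ A 5).1 +
      (3 * γ) • (blockCompanionOrbit K γ A 6).1 + (blockCompanionOrbit K γ A 7).1 = 0 := by
  simp only [blockCompanionOrbit, Matrix.sub_mul, Matrix.neg_mul, Matrix.smul_mul,
    Matrix.zero_mul, smul_neg, smul_sub, smul_smul, neg_sub, neg_neg, smul_zero, neg_zero,
    sub_zero, zero_sub]
  module

variable [DecidableEq κ]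

def blockCompanion (K : Matrix κ κ α) (γ : α) : Matrix (κ ⊕ κ) (κ ⊕ κ) α :=
  fromBlocks 0 1 (-K) (-(γ • 1))

theorem fromCols_mul_blockCompanion (P Q : Matrix ι κ α) (K : Matrix κ κ α) (γ : α) :
    fromCols P Q * blockCompanion K γ = fromCols (-(Q * K)) (P - γ • Q) := by
  rw [blockCompanion, fromCols_mul_fromBlocks]
  simp only [Matrix.mul_zero, Matrix.mul_one, Matrix.mul_neg, Matrix.mul_smul, zero_add,
    sub_eq_add_neg]

theorem fromCols_zero_mul_blockCompanion_pow (K : Matrix κ κ α) (γ : α) (A : Matrix ι κ α)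
    (k : ℕ) :
    fromCols A (0 : Matrix ι κ α) * blockCompanion K γ ^ k =
      fromCols (blockCompanionOrbit K γ A k).1 (blockCompanionOrbit K γ A k).2 := by
  induction k with
  | zero => simp [blockCompanionOrbit]
  | succ k ih => rw [pow_succ, ← Matrix.mul_assoc, ih, fromCols_mul_blockCompanion]; rfl

theorem fromCols_zero_mul_blockCompanion_pow_mul_fromRows_zero {μ : Type*} (K : Matrix κ κ α)
    (γ : α) (A : Matrix ι κ α) (W : Matrix κ μ α) (k : ℕ) :
    fromCols A (0 : Matrix ι κ α) * blockCompanion K γ ^ k * fromRows W (0 : Matrix κ μ α) =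
      (blockCompanionOrbit K γ A k).1 * W := by
  rw [fromCols_zero_mul_blockCompanion_pow, fromCols_mul_fromRows, Matrix.mul_zero, add_zero]

end Matrix

theorem stmt_10_general {m n : ℕ} (A12 : Matrix (Fin m) (Fin n) ℝ)
    (A21 : Matrix (Fin n) (Fin m) ℝ) (A22 : Matrix (Fin n) (Fin n) ℝ)
    (γ : ℝ)
    (L : Matrix (Fin m) (Fin n ⊕ Fin n) ℝ)
    (D : Matrix (Fin n ⊕ Fin n) (Fin n ⊕ Fin n) ℝ)
    (R : Matrix (Fin n ⊕ Fin n) (Fin m) ℝ)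
    (hL : L = fromCols A12 (0 : Matrix (Fin m) (Fin n) ℝ))
    (hD : D = fromBlocks 0 1 (-A22) (-(γ • (1 : Matrix (Fin n) (Fin n) ℝ))))
    (hR : R = fromRows (A22⁻¹ * A21) (0 : Matrix (Fin n) (Fin m) ℝ)) :
    γ ^ 3 • (L * D ^ 4 * R) + (3 * γ ^ 2) • (L * D ^ 5 * R) +
      (3 * γ) • (L * D ^ 6 * R) + L * D ^ 7 * R = 0 := by
  have hD' : D = blockCompanion A22 γ := hD
  subst hL hD' hR
  simp only [fromCols_zero_mul_blockCompanion_pow_mul_fromRows_zero, ← Matrix.smul_mul]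
  rw [← Matrix.add_mul, ← Matrix.add_mul, ← Matrix.add_mul, blockCompanionOrbit_fst_binomial,
    Matrix.zero_mul]

theorem stmt_10 {m n : ℕ} (A12 : Matrix (Fin m) (Fin n) ℝ)
    (A21 : Matrix (Fin n) (Fin m) ℝ) (A22 : Matrix (Fin n) (Fin n) ℝ)
    (hA22 : IsUnit A22.det) (hA : A12ᵀ = A21) (γ : ℝ)
    (L : Matrix (Fin m) (Fin n ⊕ Fin n) ℝ)
    (D : Matrix (Fin n ⊕ Fin n) (Fin n ⊕ Fin n) ℝ)
    (R : Matrix (Fin n ⊕ Fin n) (Fin m) ℝ)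
    (hL : L = fromCols A12 (0 : Matrix (Fin m) (Fin n) ℝ))
    (hD : D = fromBlocks 0 1 (-A22) (-(γ • (1 : Matrix (Fin n) (Fin n) ℝ))))
    (hR : R = fromRows (A22⁻¹ * A21) (0 : Matrix (Fin n) (Fin m) ℝ)) :
    γ ^ 3 • (L * D ^ 4 * R) + (3 * γ ^ 2) • (L * D ^ 5 * R) +
      (3 * γ) • (L * D ^ 6 * R) + L * D ^ 7 * R = 0 :=
  stmt_10_general A12 A21 A22 γ L D R hL hD hR
end

section
/- For each i ≥ 2, the moment Mᵢ = L Dⁱ R can be written as a linear combination of the matrices A₁₂ A₂₂ᵏ A₂₁ for 0 ≤ k ≤ ⌊i/2⌋ - 1, i.e., there exist real coefficients c_{i,k} with Mᵢ = Σ_{k=0}^{⌊i/2⌋-1} c_{i,k} A₁₂ A₂₂ᵏ A₂₁. -/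
/-!
Right multiplication by `D` sends a block row `[U, V]` to `[-V A₂₂, U - γ V]`. Hence
`L Dⁱ = [A₁₂ pᵢ(A₂₂) A₂₂, A₁₂ qᵢ(A₂₂)]` for polynomials with `pᵢ₊₁ = -qᵢ` and
`qᵢ₊₁ = pᵢ X - γ qᵢ`, whose degrees grow by one every second step, so `deg pᵢ < ⌊i/2⌋`.
Multiplying by `R` cancels the trailing `A₂₂`, leaving `Mᵢ = A₁₂ pᵢ(A₂₂) A₂₁`.
-/

open Matrix

section

open Polynomial

variable {R : Type*} [CommRing R]

theorem mul_X_mem_degreeLT {p : R[X]} {n : ℕ} (hp : p ∈ degreeLT R n) :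
    p * X ∈ degreeLT R (n + 1) := by
  rw [mem_degreeLT] at hp ⊢
  calc degree (p * X) ≤ degree p + 1 := (degree_mul_le _ _).trans (add_le_add_right degree_X_le _)
    _ < n + 1 := WithBot.add_lt_add_right WithBot.one_ne_bot hp
    _ = ↑(n + 1) := by push_cast; rfl

theorem aeval_eq_sum_range_of_mem_degreeLT {S : Type*} [Semiring S] [Algebra R S]
    {p : R[X]} {N : ℕ} (hp : p ∈ degreeLT R N) (x : S) :
    aeval x p = ∑ k ∈ Finset.range N, p.coeff k • x ^ k := by
  rcases eq_or_ne p 0 with rfl | hp0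
  · simp
  · exact aeval_eq_sum_range' ((natDegree_lt_iff_degree_lt hp0).2 (mem_degreeLT.1 hp)) x

/-- Index `i` describes `D ^ (i + 1)`, since the first block of `[B, 0] * D ^ 0` is not of the
form `B * p(A) * A`. -/
noncomputable def momentPolys (γ : R) : ℕ → R[X] × R[X]
  | 0 => (0, 1)
  | i + 1 => (-(momentPolys γ i).2, (momentPolys γ i).1 * X - C γ * (momentPolys γ i).2)

theorem momentPolys_mem_degreeLT (γ : R) (i : ℕ) :
    (momentPolys γ i).1 ∈ degreeLT R ((i + 1) / 2) ∧
      (momentPolys γ i).2 ∈ degreeLT R (i / 2 + 1) := by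
  induction i with
  | zero => exact ⟨zero_mem _, mem_degreeLT.2 (degree_one_le.trans_lt (by norm_num))⟩
  | succ i ih =>
    obtain ⟨hp, hq⟩ := ih
    refine ⟨?_, ?_⟩
    · rw [show (i + 1 + 1) / 2 = i / 2 + 1 by omega]
      exact neg_mem hq
    · refine sub_mem (mul_X_mem_degreeLT hp) ?_
      rw [C_mul']
      exact Submodule.smul_mem _ γ (degreeLT_mono (by omega) hq)

variable {m n : Type*} [DecidableEq n]

def dampedCompanion (A : Matrix n n R) (γ : R) : Matrix (n ⊕ n) (n ⊕ n) R :=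
  fromBlocks 0 1 (-A) (-(γ • 1))

variable [Fintype n]

theorem fromCols_mul_dampedCompanion (U V : Matrix m n R) (A : Matrix n n R) (γ : R) :
    fromCols U V * dampedCompanion A γ = fromCols (-(V * A)) (U - γ • V) := by
  rw [dampedCompanion, fromCols_mul_fromBlocks]
  simp [sub_eq_add_neg]

theorem fromCols_zero_mul_dampedCompanion_pow_succ (B : Matrix m n R) (A : Matrix n n R) (γ : R)
    (i : ℕ) : fromCols B (0 : Matrix m n R) * dampedCompanion A γ ^ (i + 1) =
      fromCols (B * aeval A (momentPolys γ i).1 * A) (B * aeval A (momentPolys γ i).2) := by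
  induction i with
  | zero => simp [momentPolys, fromCols_mul_dampedCompanion]
  | succ i ih =>
    rw [pow_succ, ← Matrix.mul_assoc, ih, fromCols_mul_dampedCompanion, momentPolys]
    congr 1
    · simp [Matrix.mul_assoc]
    · simp [Matrix.mul_sub, Matrix.mul_assoc, Algebra.algebraMap_eq_smul_one]

theorem fromCols_zero_mul_dampedCompanion_pow_mul_fromRows (B : Matrix m n R) (C : Matrix n m R)
    {A : Matrix n n R} (hA : IsUnit A.det) (γ : R) (i : ℕ) :
    fromCols B (0 : Matrix m n R) * dampedCompanion A γ ^ (i + 1) *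
        fromRows (A⁻¹ * C) (0 : Matrix n m R) = B * aeval A (momentPolys γ i).1 * C := by
  rw [fromCols_zero_mul_dampedCompanion_pow_succ, fromCols_mul_fromRows, Matrix.mul_zero,
    add_zero, Matrix.mul_assoc _ A, ← Matrix.mul_assoc A, mul_nonsing_inv A hA, Matrix.one_mul]

end

theorem stmt_11_general {m n : ℕ} (A12 : Matrix (Fin m) (Fin n) ℝ)
    (A21 : Matrix (Fin n) (Fin m) ℝ) (A22 : Matrix (Fin n) (Fin n) ℝ)
    (hA22 : IsUnit A22.det) (γ : ℝ)
    (L : Matrix (Fin m) (Fin n ⊕ Fin n) ℝ)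
    (D : Matrix (Fin n ⊕ Fin n) (Fin n ⊕ Fin n) ℝ)
    (R : Matrix (Fin n ⊕ Fin n) (Fin m) ℝ)
    (hL : L = fromCols A12 (0 : Matrix (Fin m) (Fin n) ℝ))
    (hD : D = fromBlocks 0 1 (-A22) (-(γ • (1 : Matrix (Fin n) (Fin n) ℝ))))
    (hR : R = fromRows (A22⁻¹ * A21) (0 : Matrix (Fin n) (Fin m) ℝ)) :
    ∀ i : ℕ, 2 ≤ i → ∃ c : ℕ → ℝ,
      L * D ^ i * R = ∑ k ∈ Finset.range (i / 2), c k • (A12 * A22 ^ k * A21) := by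
  intro i hi
  obtain ⟨j, rfl⟩ : ∃ j, i = j + 1 := ⟨i - 1, by omega⟩
  subst hL hD hR
  refine ⟨fun k => (momentPolys γ j).1.coeff k, ?_⟩
  rw [show fromBlocks _ _ _ _ = dampedCompanion A22 γ from rfl,
    fromCols_zero_mul_dampedCompanion_pow_mul_fromRows _ _ hA22,
    aeval_eq_sum_range_of_mem_degreeLT (momentPolys_mem_degreeLT γ j).1, Matrix.mul_sum,
    Matrix.sum_mul]
  exact Finset.sum_congr rfl fun k _ => by rw [Matrix.mul_smul, Matrix.smul_mul, Matrix.mul_assoc]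

theorem stmt_11 {m n : ℕ} (A12 : Matrix (Fin m) (Fin n) ℝ)
    (A21 : Matrix (Fin n) (Fin m) ℝ) (A22 : Matrix (Fin n) (Fin n) ℝ)
    (hA22 : IsUnit A22.det) (hA : A12ᵀ = A21) (γ : ℝ)
    (L : Matrix (Fin m) (Fin n ⊕ Fin n) ℝ)
    (D : Matrix (Fin n ⊕ Fin n) (Fin n ⊕ Fin n) ℝ)
    (R : Matrix (Fin n ⊕ Fin n) (Fin m) ℝ)
    (hL : L = fromCols A12 (0 : Matrix (Fin m) (Fin n) ℝ))
    (hD : D = fromBlocks 0 1 (-A22) (-(γ • (1 : Matrix (Fin n) (Fin n) ℝ))))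
    (hR : R = fromRows (A22⁻¹ * A21) (0 : Matrix (Fin n) (Fin m) ℝ)) :
    ∀ i : ℕ, 2 ≤ i → ∃ c : ℕ → ℝ,
      L * D ^ i * R = ∑ k ∈ Finset.range (i / 2), c k • (A12 * A22 ^ k * A21) :=
  stmt_11_general A12 A21 A22 hA22 γ L D R hL hD hR
end

section
/- Let Φ ∈ ℝ^{N×m} and Ψ ∈ ℝ^{N×(N−m)} have columns forming together an orthonormal basis of ℝ^N (so [Φ Ψ] is orthogonal). Let A ∈ ℝ^{N×N} be symmetric positive definite, and set A₂₂ = ΨᵀAΨ, A₂₁ = ΨᵀAΦ. Then A⁻¹Φ(ΦᵀA⁻¹Φ)⁻¹ = Φ − Ψ A₂₂⁻¹ A₂₁. -/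
/-!
Put X := Φ - Ψ A₂₂⁻¹ A₂₁. By construction Ψᵀ A X = 0, so completeness of [Φ Ψ] gives
A X = Φ M with M := Φᵀ A X, i.e. X = A⁻¹ Φ M. Since Φᵀ X = 1, this says (Φᵀ A⁻¹ Φ) M = 1, so
M = (Φᵀ A⁻¹ Φ)⁻¹ and X = A⁻¹ Φ (Φᵀ A⁻¹ Φ)⁻¹. Invertibility of A₂₂ comes from A being
positive definite and Ψ injective.
-/

open Matrix

namespace Matrix

variable {n m k α : Type*} [Fintype n] [CommRing α]

theorem mul_sub_mul_inv_mul_mul_eq_zero [Fintype k] [DecidableEq k] (P : Matrix k n α)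
    (Q : Matrix n k α) (R : Matrix n m α) (hPQ : IsUnit (P * Q)) :
    P * (R - Q * (P * Q)⁻¹ * (P * R)) = 0 := by
  rw [Matrix.mul_sub, Matrix.mul_assoc Q, ← Matrix.mul_assoc P,
    mul_nonsing_inv_cancel_left _ _ ((isUnit_iff_isUnit_det _).mp hPQ), sub_self]

theorem eq_mul_transpose_mul_of_transpose_mul_eq_zero [Fintype m] [Fintype k] [DecidableEq n]
    {Φ : Matrix n m α} {Ψ : Matrix n k α} (hcomp : Φ * Φᵀ + Ψ * Ψᵀ = 1) {Y : Matrix n m α}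
    (hY : Ψᵀ * Y = 0) : Y = Φ * (Φᵀ * Y) := by
  calc Y = (Φ * Φᵀ + Ψ * Ψᵀ) * Y := by rw [hcomp, Matrix.one_mul]
    _ = Φ * (Φᵀ * Y) := by
      rw [Matrix.add_mul, Matrix.mul_assoc, Matrix.mul_assoc, hY, Matrix.mul_zero, add_zero]

theorem inv_mul_mul_inv_mul_inv_mul_eq [Fintype m] [DecidableEq n] [DecidableEq m]
    {A : Matrix n n α} (hA : IsUnit A) {Φ : Matrix n m α} {L : Matrix m n α} {X : Matrix n m α}
    {M : Matrix m m α} (hLX : L * X = 1) (hAX : A * X = Φ * M) :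
    A⁻¹ * Φ * (L * A⁻¹ * Φ)⁻¹ = X := by
  have hX : X = A⁻¹ * Φ * M := by
    rw [Matrix.mul_assoc, ← hAX, nonsing_inv_mul_cancel_left _ _ ((isUnit_iff_isUnit_det _).mp hA)]
  have hM : (L * A⁻¹ * Φ)⁻¹ = M :=
    inv_eq_right_inv (by rw [← hLX, hX, Matrix.mul_assoc, Matrix.mul_assoc, Matrix.mul_assoc])
  rw [hM, hX]

end Matrix

theorem stmt_17 {N m k : ℕ} (Φ : Matrix (Fin N) (Fin m) ℝ)
    (Ψ : Matrix (Fin N) (Fin k) ℝ) (A : Matrix (Fin N) (Fin N) ℝ)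
    (hΦ : Φᵀ * Φ = 1) (hΨ : Ψᵀ * Ψ = 1) (hΦΨ : Φᵀ * Ψ = 0)
    (hcomp : Φ * Φᵀ + Ψ * Ψᵀ = 1) (hA : A.PosDef) :
    A⁻¹ * Φ * (Φᵀ * A⁻¹ * Φ)⁻¹ = Φ - Ψ * (Ψᵀ * A * Ψ)⁻¹ * (Ψᵀ * A * Φ) := by
  have hΨ_injective : Function.Injective Ψ.mulVec :=
    Function.LeftInverse.injective (g := Ψᵀ.mulVec) fun x => by
      rw [mulVec_mulVec, hΨ, one_mulVec]
  have hA₂₂ : IsUnit (Ψᵀ * A * Ψ) := by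
    simpa only [conjTranspose_eq_transpose_of_trivial] using
      (hA.conjTranspose_mul_mul_same hΨ_injective).isUnit
  have hΦX : Φᵀ * (Φ - Ψ * (Ψᵀ * A * Ψ)⁻¹ * (Ψᵀ * A * Φ)) = 1 := by
    rw [Matrix.mul_sub, hΦ, Matrix.mul_assoc, Matrix.mul_assoc, ← Matrix.mul_assoc Φᵀ, hΦΨ,
      Matrix.zero_mul, sub_zero]
  have hΨAX : Ψᵀ * (A * (Φ - Ψ * (Ψᵀ * A * Ψ)⁻¹ * (Ψᵀ * A * Φ))) = 0 := by
    rw [← Matrix.mul_assoc]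
    exact mul_sub_mul_inv_mul_mul_eq_zero (Ψᵀ * A) Ψ Φ hA₂₂
  exact inv_mul_mul_inv_mul_inv_mul_eq hA.isUnit hΦX
    (eq_mul_transpose_mul_of_transpose_mul_eq_zero hcomp hΨAX)
end

section
/- Under the same orthogonality assumptions, A⁻¹Φ(ΦᵀA⁻¹Φ)⁻¹ΦᵀA⁻¹ = ΦΦᵀA⁻¹ − ΨA₂₂⁻¹Ψᵀ + (I − ΦΦᵀ)A⁻¹, where A₂₂ = ΨᵀAΨ. -/
/-!
Put `X = A⁻¹ - Ψ (ΨᵀAΨ)⁻¹ Ψᵀ`. Then `X A Ψ = 0`, so `ΦΦᵀ + ΨΨᵀ = 1` gives `X A = X A Φ Φᵀ`,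
i.e. `X = (X A Φ) Φᵀ A⁻¹`. Multiplying by `Φ` and using `ΨᵀΦ = 0` yields
`(X A Φ)(ΦᵀA⁻¹Φ) = X Φ = A⁻¹Φ`, which determines `X A Φ = A⁻¹Φ (ΦᵀA⁻¹Φ)⁻¹`.
-/

open Matrix

namespace Matrix

variable {l n p q R : Type*} [Fintype n] [Fintype p] [Fintype q]

theorem PosDef.transpose_mul_mul_same_of_transpose_mul_self_eq_one [CommRing R] [PartialOrder R]
    [StarRing R] [TrivialStar R] [DecidableEq p] {A : Matrix n n R} (hA : A.PosDef)
    {B : Matrix n p R} (hB : Bᵀ * B = 1) : (Bᵀ * A * B).PosDef := by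
  have hBinj : Function.Injective B.mulVec :=
    Function.LeftInverse.injective (g := Bᵀ.mulVec) fun x => by
      rw [mulVec_mulVec, hB, one_mulVec]
  simpa only [conjTranspose_eq_transpose_of_trivial] using hA.conjTranspose_mul_mul_same hBinj

variable [CommRing R] [DecidableEq n]

theorem mul_mul_transpose_eq_self_of_mul_eq_zero {Φ : Matrix n p R} {Ψ : Matrix n q R}
    (hcomp : Φ * Φᵀ + Ψ * Ψᵀ = 1) {Y : Matrix l n R} (hY : Y * Ψ = 0) : Y * Φ * Φᵀ = Y :=
  calc Y * Φ * Φᵀ = Y * (Φ * Φᵀ + Ψ * Ψᵀ) := by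
        rw [Matrix.mul_add, ← Matrix.mul_assoc Y Ψ, hY, Matrix.zero_mul, add_zero,
          Matrix.mul_assoc]
    _ = Y := by rw [hcomp, Matrix.mul_one]

variable [DecidableEq p] [DecidableEq q]

theorem inv_sub_eq_of_transpose_mul_eq_zero {A : Matrix n n R} {Φ : Matrix n p R}
    {Ψ : Matrix n q R} (hΨΦ : Ψᵀ * Φ = 0) (hcomp : Φ * Φᵀ + Ψ * Ψᵀ = 1) (hA : IsUnit A.det)
    (hM : IsUnit (Ψᵀ * A * Ψ).det) (hS : IsUnit (Φᵀ * A⁻¹ * Φ).det) :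
    A⁻¹ - Ψ * (Ψᵀ * A * Ψ)⁻¹ * Ψᵀ = A⁻¹ * Φ * (Φᵀ * A⁻¹ * Φ)⁻¹ * Φᵀ * A⁻¹ := by
  set X := A⁻¹ - Ψ * (Ψᵀ * A * Ψ)⁻¹ * Ψᵀ
  have hXAΨ : X * A * Ψ = 0 :=
    calc X * A * Ψ = A⁻¹ * A * Ψ - Ψ * ((Ψᵀ * A * Ψ)⁻¹ * (Ψᵀ * A * Ψ)) := by
          simp only [X, Matrix.sub_mul, Matrix.mul_assoc]
      _ = 0 := by
          rw [nonsing_inv_mul _ hA, nonsing_inv_mul _ hM, Matrix.one_mul, Matrix.mul_one,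
            sub_self]
  have hXΦ : X * Φ = A⁻¹ * Φ := by
    simp only [X, Matrix.sub_mul, Matrix.mul_assoc, hΨΦ, Matrix.mul_zero, sub_zero]
  have hXAΦ : X * A * Φ = A⁻¹ * Φ * (Φᵀ * A⁻¹ * Φ)⁻¹ :=
    calc X * A * Φ = X * A * Φ * (Φᵀ * A⁻¹ * Φ) * (Φᵀ * A⁻¹ * Φ)⁻¹ :=
          (mul_nonsing_inv_cancel_right _ _ hS).symm
      _ = X * A * Φ * Φᵀ * A⁻¹ * Φ * (Φᵀ * A⁻¹ * Φ)⁻¹ := by simp only [Matrix.mul_assoc]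
      _ = A⁻¹ * Φ * (Φᵀ * A⁻¹ * Φ)⁻¹ := by
          rw [mul_mul_transpose_eq_self_of_mul_eq_zero hcomp hXAΨ,
            mul_nonsing_inv_cancel_right _ _ hA, hXΦ]
  calc X = X * A * Φ * Φᵀ * A⁻¹ := by
        rw [mul_mul_transpose_eq_self_of_mul_eq_zero hcomp hXAΨ,
          mul_nonsing_inv_cancel_right _ _ hA]
    _ = A⁻¹ * Φ * (Φᵀ * A⁻¹ * Φ)⁻¹ * Φᵀ * A⁻¹ := by rw [hXAΦ]

end Matrix

theorem stmt_18 {N m k : ℕ} (Φ : Matrix (Fin N) (Fin m) ℝ)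
    (Ψ : Matrix (Fin N) (Fin k) ℝ) (A : Matrix (Fin N) (Fin N) ℝ)
    (hΦ : Φᵀ * Φ = 1) (hΨ : Ψᵀ * Ψ = 1) (hΦΨ : Φᵀ * Ψ = 0)
    (hcomp : Φ * Φᵀ + Ψ * Ψᵀ = 1) (hA : A.PosDef) :
    A⁻¹ * Φ * (Φᵀ * A⁻¹ * Φ)⁻¹ * Φᵀ * A⁻¹ =
      Φ * Φᵀ * A⁻¹ - Ψ * (Ψᵀ * A * Ψ)⁻¹ * Ψᵀ + (1 - Φ * Φᵀ) * A⁻¹ := by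
  have hΨΦ : Ψᵀ * Φ = 0 := by simpa [transpose_mul] using congrArg transpose hΦΨ
  have hM := hA.transpose_mul_mul_same_of_transpose_mul_self_eq_one hΨ
  have hS := hA.inv.transpose_mul_mul_same_of_transpose_mul_self_eq_one hΦ
  rw [← inv_sub_eq_of_transpose_mul_eq_zero hΨΦ hcomp hA.det_pos.ne'.isUnit
    hM.det_pos.ne'.isUnit hS.det_pos.ne'.isUnit, Matrix.sub_mul, Matrix.one_mul]
  abel
end
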